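/- Let 0 < λ < ρ < 1, γ = (1-λ-ρ)/(1-λ-ρ+2λρ), ξ_λ = 2(ρ-λ)λ/(1-λ-ρ+2λρ), and N ≠ 0 a real number. Define P = ((1+γ)N, (1-γ)N) and A_λ = (((λ-1)/λ)ξ_λ N, ξ_λ N). Then P - A_λ is a positive scalar multiple of ((1-λ)², λ²). -/

import Mathlib

/-!
Write `D = 1 - λ - ρ + 2λρ = (1 - λ)(1 - ρ) + λρ`, which is positive. Over the common
denominator `D`, the first coordinate of `P - A_λ` is `2N((1 - λ)(1 - ρ) + (1 - λ)(ρ - λ)) / D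
= 2N(1 - λ)² / D` and the second is `2N(λρ - (ρ - λ)λ) / D = 2Nλ² / D`, so the scalar is `2N / D`.
-/

lemma one_sub_sub_add_two_mul_mul_pos {lam rho : ℝ} (h0 : 0 < lam) (h1 : lam < 1)
    (h2 : 0 < rho) (h3 : rho < 1) : 0 < 1 - lam - rho + 2 * lam * rho := by
  nlinarith [mul_pos (sub_pos.2 h1) (sub_pos.2 h3), mul_pos h0 h2]

section Coordinates

variable {lam rho : ℝ} (hD : 1 - lam - rho + 2 * lam * rho ≠ 0)
include hD

lemma one_add_sub_exit_fst_eq (hlam : lam ≠ 0) :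
    (1 + (1 - lam - rho) / (1 - lam - rho + 2 * lam * rho))
        - (lam - 1) / lam * (2 * (rho - lam) * lam / (1 - lam - rho + 2 * lam * rho))
      = 2 / (1 - lam - rho + 2 * lam * rho) * (1 - lam) ^ 2 := by
  generalize hE : 1 - lam - rho + 2 * lam * rho = D at *
  field_simp
  linear_combination -hE

lemma one_sub_sub_exit_snd_eq :
    (1 - (1 - lam - rho) / (1 - lam - rho + 2 * lam * rho))
        - 2 * (rho - lam) * lam / (1 - lam - rho + 2 * lam * rho)
      = 2 / (1 - lam - rho + 2 * lam * rho) * lam ^ 2 := by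
  generalize hE : 1 - lam - rho + 2 * lam * rho = D at *
  field_simp
  linear_combination -hE

end Coordinates

theorem characteristic_direction (lam rho N : ℝ) (h0 : 0 < lam) (h1 : lam < rho)
    (h2 : rho < 1) (hN : 0 < N) :
    let γ := (1 - lam - rho) / (1 - lam - rho + 2 * lam * rho)
    let ξ := 2 * (rho - lam) * lam / (1 - lam - rho + 2 * lam * rho)
    let P : ℝ × ℝ := ((1 + γ) * N, (1 - γ) * N)
    let A : ℝ × ℝ := ((lam - 1) / lam * ξ * N, ξ * N)
    ∃ c : ℝ, 0 < c ∧ P - A = c • (((1 - lam) ^ 2, lam ^ 2) : ℝ × ℝ) := by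
  intro γ ξ P A
  have hD : 0 < 1 - lam - rho + 2 * lam * rho :=
    one_sub_sub_add_two_mul_mul_pos h0 (h1.trans h2) (h0.trans h1) h2
  refine ⟨2 * N / (1 - lam - rho + 2 * lam * rho), by positivity, Prod.ext ?_ ?_⟩
  · simp only [P, A, γ, ξ, Prod.fst_sub, Prod.smul_fst, smul_eq_mul]
    linear_combination N * one_add_sub_exit_fst_eq hD.ne' h0.ne'
  · simp only [P, A, γ, ξ, Prod.snd_sub, Prod.smul_snd, smul_eq_mul]
    linear_combination N * one_sub_sub_exit_snd_eq (lam := lam) hD.ne'
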